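/- arXiv:1709.05321 — 3 statements merged into one kernel-verified Lean document; each statement's English description precedes it below -/
import Mathlib

section
/- Let G be a DAG on d nodes with continuous causal mechanisms f = (f_1,…,f_d), each f_i continuous on a compact domain. For every ε > 0 there exist continuous functions f̂ = (f̂_1,…,f̂_d) realizable as one-hidden-layer neural networks such that for every noise vector e ∈ [0,1]^d, the vectors z(e) and ẑ(e) obtained by recursively evaluating f and f̂ respectively in topological order of G satisfy ‖z(e) − ẑ(e)‖ < ε. -/
open Set Filter

/-!
Errors propagate along a topological order in a controlled way. The solution `z` is continuous,
hence bounded on the noise cube, and each `f i` is uniformly continuous on a compact box around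
the values of its parents; so if every network is `δ`-close to its mechanism on that box, an
induction on the order keeps `|z e i - ẑ e i|` below any prescribed tolerance once `δ` is small
enough, the tolerance at a node fixing the one at its ancestors.

The networks come from density: linear combinations of cosine ridges `cos (w ⬝ᵥ x + c)` form an
algebra, as `cos a * cos b = (cos (a + b) + cos (a - b)) / 2`, which separates points, hence is
dense in `C(K, ℝ)` by Stone–Weierstrass; and each ridge is a uniform limit of networks, because on
an interval `t ↦ cos (t + c)` is approximated by a staircase of steep sigmoids.
-/

section Sigmoid

variable {σ : ℝ → ℝ}

lemma exists_forall_abs_le_of_tendsto (hσc : Continuous σ) (hσ1 : Tendsto σ atTop (nhds 1))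
    (hσ0 : Tendsto σ atBot (nhds 0)) : ∃ M, ∀ x, |σ x| ≤ M := by
  obtain ⟨M, hM⟩ := isBounded_iff_forall_norm_le.mp
    (hσc.isBounded_range_iff_isBigO_atTop_atBot.mpr ⟨hσ1.isBigO_one ℝ, hσ0.isBigO_one ℝ⟩)
  exact ⟨M, fun x => hM _ (mem_range_self x)⟩

lemma exists_abs_sub_lt_of_tendsto (hσ1 : Tendsto σ atTop (nhds 1))
    (hσ0 : Tendsto σ atBot (nhds 0)) {η : ℝ} (hη : 0 < η) :
    ∃ T ≥ 0, ∀ x, (T ≤ x → |σ x - 1| < η) ∧ (x ≤ -T → |σ x| < η) := by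
  obtain ⟨T₁, hT₁⟩ := eventually_atTop.mp (hσ1 (Metric.ball_mem_nhds 1 hη))
  obtain ⟨T₀, hT₀⟩ := eventually_atBot.mp (hσ0 (Metric.ball_mem_nhds 0 hη))
  refine ⟨max (max T₁ (-T₀)) 0, le_max_right _ _, fun x => ⟨fun hx => ?_, fun hx => ?_⟩⟩
  · simpa [Real.dist_eq] using hT₁ x (by grind)
  · simpa [Real.dist_eq] using hT₀ x (by grind)

lemma exists_nat_lt_le_le {u : ℝ} {N : ℕ} (hu₀ : 0 ≤ u) (huN : u ≤ N) (hN : 0 < N) :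
    ∃ k < N, (k : ℝ) ≤ u ∧ u ≤ k + 1 := by
  rcases huN.lt_or_eq with hlt | rfl
  · exact ⟨⌊u⌋₊, (Nat.floor_lt hu₀).2 hlt, Nat.floor_le hu₀, (Nat.lt_floor_add_one u).le⟩
  · refine ⟨N - 1, by omega, ?_, ?_⟩ <;> simp [Nat.cast_sub hN]

lemma abs_sum_sub_mul_sub_le {p S : ℕ → ℝ} {N k₀ : ℕ} (hk₀ : k₀ < N) {ω η M : ℝ} (hη : 0 ≤ η)
    (hp : ∀ k < N, |p (k + 1) - p k| ≤ ω) (hlow : ∀ k < k₀, |S k - 1| ≤ η)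
    (hhigh : ∀ k < N, k₀ < k → |S k| ≤ η) (hmid : |S k₀| ≤ M) :
    |∑ k ∈ Finset.range N, (p (k + 1) - p k) * S k - (p k₀ - p 0)| ≤ ω * (N * η + M) := by
  classical
  have hω : 0 ≤ ω := (abs_nonneg _).trans (hp k₀ hk₀)
  set H : ℕ → ℝ := fun k => if k < k₀ then 1 else 0
  have hH : ∑ k ∈ Finset.range N, (p (k + 1) - p k) * H k = p k₀ - p 0 := by
    have hbelow : ∑ k ∈ Finset.range k₀, (p (k + 1) - p k) * H k
        = ∑ k ∈ Finset.range k₀, (p (k + 1) - p k) :=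
      Finset.sum_congr rfl fun k hk => by simp [H, Finset.mem_range.mp hk]
    have habove : ∑ k ∈ Finset.Ico k₀ N, (p (k + 1) - p k) * H k = 0 :=
      Finset.sum_eq_zero fun k hk => by simp [H, (Finset.mem_Ico.mp hk).1.not_gt]
    rw [← Finset.sum_range_add_sum_Ico _ hk₀.le, hbelow, habove, add_zero, Finset.sum_range_sub]
  have hSH : ∀ k ∈ Finset.range N, |S k - H k| ≤ η + if k = k₀ then M else 0 := by
    intro k hk
    rcases lt_trichotomy k k₀ with hlt | rfl | hgt
    · simpa [H, hlt, hlt.ne] using hlow k hlt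
    · simpa [H] using hmid.trans (le_add_of_nonneg_left hη)
    · simpa [H, hgt.ne', hgt.not_gt] using hhigh k (Finset.mem_range.mp hk) hgt
  calc |∑ k ∈ Finset.range N, (p (k + 1) - p k) * S k - (p k₀ - p 0)|
      = |∑ k ∈ Finset.range N, (p (k + 1) - p k) * (S k - H k)| := by
        rw [← hH, ← Finset.sum_sub_distrib]; simp only [mul_sub]
    _ ≤ ∑ k ∈ Finset.range N, ω * (η + if k = k₀ then M else 0) := by
        refine (Finset.abs_sum_le_sum_abs _ _).trans (Finset.sum_le_sum fun k hk => ?_)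
        rw [abs_mul]
        exact mul_le_mul (hp k (Finset.mem_range.mp hk)) (hSH k hk) (abs_nonneg _) hω
    _ = ω * (N * η + M) := by
        rw [← Finset.mul_sum, Finset.sum_add_distrib, Finset.sum_ite_eq']
        simp [hk₀]

lemma exists_abs_sum_sigmoid_sub_le {M η T ω : ℝ} (hM : ∀ x, |σ x| ≤ M)
    (hη : 0 ≤ η) (hT₀ : 0 ≤ T) (hT : ∀ x, (T ≤ x → |σ x - 1| < η) ∧ (x ≤ -T → |σ x| < η))
    {q : ℕ → ℝ} {N : ℕ} (hN : 0 < N) (hq : ∀ k < N, |q (k + 1) - q k| ≤ ω) {u : ℝ}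
    (hu : u ∈ Icc (0 : ℝ) N) :
    ∃ k₀ < N, (k₀ : ℝ) ≤ u ∧ u ≤ k₀ + 1 ∧
      |∑ k ∈ Finset.range N, (q (k + 1) - q k) * σ (2 * T * (u - k - 1 / 2)) - (q k₀ - q 0)|
        ≤ ω * (N * η + M) := by
  obtain ⟨k₀, hk₀N, hk₀u, huk₀⟩ := exists_nat_lt_le_le hu.1 hu.2 hN
  refine ⟨k₀, hk₀N, hk₀u, huk₀, abs_sum_sub_mul_sub_le hk₀N hη hq (fun k hk => ?_)
    (fun k _ hk => ?_) (hM _)⟩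
  · have : (k : ℝ) + 1 ≤ k₀ := by exact_mod_cast hk
    exact ((hT _).1 (by nlinarith)).le
  · have : (k₀ : ℝ) + 1 ≤ k := by exact_mod_cast hk
    exact ((hT _).2 (by nlinarith)).le

lemma exists_sum_sigmoid_near (hσc : Continuous σ) (hσ1 : Tendsto σ atTop (nhds 1))
    (hσ0 : Tendsto σ atBot (nhds 0)) {g : ℝ → ℝ} {A B : ℝ} (hAB : A < B)
    (hg : ContinuousOn g (Icc A B)) {ε : ℝ} (hε : 0 < ε) :
    ∃ (n : ℕ) (c a b : ℕ → ℝ) (c₀ : ℝ), ∀ t ∈ Icc A B,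
      |g t - (∑ k ∈ Finset.range n, c k * σ (a k * t + b k) + c₀)| < ε := by
  obtain ⟨M, hM⟩ := exists_forall_abs_le_of_tendsto hσc hσ1 hσ0
  have hM₀ : 0 ≤ M := (abs_nonneg _).trans (hM 0)
  set ω := ε / (M + 2)
  obtain ⟨δ, hδ, hgδ⟩ := Metric.uniformContinuousOn_iff.mp
    (isCompact_Icc.uniformContinuousOn_of_continuous hg) ω (by positivity)
  obtain ⟨N, hN⟩ := exists_nat_gt ((B - A) / δ)
  have hN₀ : (0 : ℝ) < N := (div_pos (sub_pos.2 hAB) hδ).trans hN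
  set h := (B - A) / N
  have hh : 0 < h := div_pos (sub_pos.2 hAB) hN₀
  have hhδ : h < δ := (div_lt_comm₀ hδ hN₀).1 hN
  obtain ⟨T, hT₀, hT⟩ := exists_abs_sub_lt_of_tendsto hσ1 hσ0 (one_div_pos.2 hN₀)
  set node : ℕ → ℝ := fun k => A + k * h
  have hnode : ∀ k ≤ N, node k ∈ Icc A B := by
    intro k hk
    have : (k : ℝ) * h ≤ N * h := by gcongr
    have : (N : ℝ) * h = B - A := by simp only [h]; field_simp
    constructor <;> nlinarith [node]
  -- the `k`-th sigmoid switches from `0` to `1` at the midpoint of `[node k, node (k + 1)]`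
  refine ⟨N, fun k => g (node (k + 1)) - g (node k), fun _ => 2 * T / h,
    fun k => -(2 * T / h * (node k + h / 2)), g A, fun t ht => ?_⟩
  obtain ⟨k₀, hk₀N, hk₀t, htk₀, hsum⟩ := exists_abs_sum_sigmoid_sub_le hM
    (one_div_pos.2 hN₀).le hT₀ hT (q := fun k => g (node k)) (by exact_mod_cast hN₀)
    (fun k hk => (hgδ _ (hnode (k + 1) hk) _ (hnode k hk.le)
      (by simpa [node, Real.dist_eq, abs_of_pos hh, add_mul, ← add_assoc] using hhδ)).le)
    (u := (t - A) / h) ⟨div_nonneg (sub_nonneg.2 ht.1) hh.le,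
      (div_le_iff₀ hh).2 (by simp only [h]; field_simp; linarith [ht.2])⟩
  have hclose : |g t - g (node k₀)| < ω := by
    have h₁ : node k₀ ≤ t := by simp only [node]; linarith [(le_div_iff₀ hh).1 hk₀t]
    have h₂ : t ≤ node k₀ + h := by simp only [node]; linarith [(div_le_iff₀ hh).1 htk₀]
    exact hgδ t ht _ (hnode k₀ hk₀N.le)
      (by rw [Real.dist_eq, abs_of_nonneg (by linarith)]; linarith)
  have harg : ∀ k : ℕ, 2 * T / h * t + -(2 * T / h * (node k + h / 2))
      = 2 * T * ((t - A) / h - k - 1 / 2) := by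
    intro k; simp only [node]; field_simp; ring
  have hnode₀ : node 0 = A := by simp [node]
  simp only [harg, hnode₀] at hsum ⊢
  calc _ ≤ |g t - g (node k₀)| + |∑ k ∈ Finset.range N, (g (node (k + 1)) - g (node k)) *
        σ (2 * T * ((t - A) / h - k - 1 / 2)) - (g (node k₀) - g A)| :=
        le_of_eq_of_le (by ring_nf) (abs_sub _ _)
    _ < ω + ω * (N * (1 / N) + M) := add_lt_add_of_lt_of_le hclose hsum
    _ = ε := by simp only [ω]; field_simp; ring

end Sigmoid

section ShallowNet

variable {ι : Type*} [Fintype ι] {σ : ℝ → ℝ}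

def IsShallowNet (σ : ℝ → ℝ) (F : (ι → ℝ) → ℝ) : Prop :=
  ∃ (n : ℕ) (a : Fin n → ℝ) (w : Fin n → ι → ℝ) (b : Fin n → ℝ) (c : ℝ),
    ∀ x, F x = ∑ l, a l * σ (w l ⬝ᵥ x + b l) + c

lemma isShallowNet_const (c : ℝ) : IsShallowNet σ fun _ : ι → ℝ => c :=
  ⟨0, 0, 0, 0, c, fun x => by simp⟩

lemma IsShallowNet.add {F G : (ι → ℝ) → ℝ} (hF : IsShallowNet σ F) (hG : IsShallowNet σ G) :
    IsShallowNet σ (F + G) := by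
  obtain ⟨n₁, a₁, w₁, b₁, c₁, h₁⟩ := hF
  obtain ⟨n₂, a₂, w₂, b₂, c₂, h₂⟩ := hG
  refine ⟨n₁ + n₂, Fin.append a₁ a₂, Fin.append w₁ w₂, Fin.append b₁ b₂, c₁ + c₂, fun x => ?_⟩
  simp only [Pi.add_apply, h₁, h₂, Fin.sum_univ_add, Fin.append_left, Fin.append_right]
  ring

lemma IsShallowNet.const_smul {F : (ι → ℝ) → ℝ} (r : ℝ) (hF : IsShallowNet σ F) :
    IsShallowNet σ (r • F) := by
  obtain ⟨n, a, w, b, c, h⟩ := hF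
  refine ⟨n, r • a, w, b, r * c, fun x => ?_⟩
  simp only [Pi.smul_apply, smul_eq_mul, h, mul_add, Finset.mul_sum, mul_assoc]

lemma isShallowNet_sum_sigmoid_dotProduct (n : ℕ) (c a b : ℕ → ℝ) (c₀ : ℝ) (w : ι → ℝ) :
    IsShallowNet σ fun x => ∑ k ∈ Finset.range n, c k * σ (a k * (w ⬝ᵥ x) + b k) + c₀ := by
  refine ⟨n, fun k => c k, fun k => a k • w, fun k => b k, c₀, fun x => ?_⟩
  simp only [smul_dotProduct, smul_eq_mul,
    Fin.sum_univ_eq_sum_range (fun k => c k * σ (a k * (w ⬝ᵥ x) + b k))]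

def shallowNetSubmodule (σ : ℝ → ℝ) (K : Set (ι → ℝ)) : Submodule ℝ C(K, ℝ) where
  carrier := {g | ∃ F : (ι → ℝ) → ℝ, IsShallowNet σ F ∧ ∀ x : K, g x = F x}
  add_mem' := by
    rintro g₁ g₂ ⟨F₁, hF₁, h₁⟩ ⟨F₂, hF₂, h₂⟩
    exact ⟨_, hF₁.add hF₂, fun x => by simp [h₁, h₂]⟩
  zero_mem' := ⟨_, isShallowNet_const 0, fun _ => rfl⟩
  smul_mem' := by
    rintro r g ⟨F, hF, h⟩
    exact ⟨_, hF.const_smul r, fun x => by simp [h]⟩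

noncomputable def cosRidge (K : Set (ι → ℝ)) (w : ι → ℝ) (c : ℝ) : C(K, ℝ) :=
  ⟨fun x => Real.cos (w ⬝ᵥ (x : ι → ℝ) + c), by fun_prop⟩

lemma cosRidge_mul_cosRidge (K : Set (ι → ℝ)) (w₁ w₂ : ι → ℝ) (c₁ c₂ : ℝ) :
    cosRidge K w₁ c₁ * cosRidge K w₂ c₂ =
      (2⁻¹ : ℝ) • (cosRidge K (w₁ + w₂) (c₁ + c₂) + cosRidge K (w₁ - w₂) (c₁ - c₂)) := by
  ext x
  simp only [cosRidge, ContinuousMap.mul_apply, ContinuousMap.smul_apply, ContinuousMap.add_apply,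
    ContinuousMap.coe_mk, add_dotProduct, sub_dotProduct, smul_eq_mul]
  rw [show w₁ ⬝ᵥ (x : ι → ℝ) + w₂ ⬝ᵥ x + (c₁ + c₂) = w₁ ⬝ᵥ x + c₁ + (w₂ ⬝ᵥ x + c₂) by ring,
    show w₁ ⬝ᵥ (x : ι → ℝ) - w₂ ⬝ᵥ x + (c₁ - c₂) = w₁ ⬝ᵥ x + c₁ - (w₂ ⬝ᵥ x + c₂) by ring,
    Real.cos_add (w₁ ⬝ᵥ (x : ι → ℝ) + c₁), Real.cos_sub (w₁ ⬝ᵥ (x : ι → ℝ) + c₁)]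
  ring

def cosRidgeSubalgebra (K : Set (ι → ℝ)) : Subalgebra ℝ C(K, ℝ) :=
  (Submodule.span ℝ (range fun p : (ι → ℝ) × ℝ => cosRidge K p.1 p.2)).toSubalgebra
    (Submodule.subset_span ⟨(0, 0), by ext; simp [cosRidge]⟩)
    (fun x y hx hy => by
      have hxy := Submodule.mul_mem_mul hx hy
      rw [Submodule.span_mul_span] at hxy
      refine Submodule.span_le.mpr ?_ hxy
      rintro _ ⟨_, ⟨⟨w₁, c₁⟩, rfl⟩, _, ⟨⟨w₂, c₂⟩, rfl⟩, rfl⟩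
      change cosRidge K w₁ c₁ * cosRidge K w₂ c₂ ∈ _
      rw [cosRidge_mul_cosRidge]
      exact Submodule.smul_mem _ _ (Submodule.add_mem _ (Submodule.subset_span ⟨(_, _), rfl⟩)
        (Submodule.subset_span ⟨(_, _), rfl⟩)))

lemma cosRidge_mem_cosRidgeSubalgebra (K : Set (ι → ℝ)) (w : ι → ℝ) (c : ℝ) :
    cosRidge K w c ∈ cosRidgeSubalgebra K :=
  Submodule.subset_span ⟨(w, c), rfl⟩

lemma cosRidgeSubalgebra_separatesPoints [DecidableEq ι] (K : Set (ι → ℝ)) :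
    (cosRidgeSubalgebra K).SeparatesPoints := by
  intro x y hxy
  obtain ⟨j, hj⟩ : ∃ j, (x : ι → ℝ) j ≠ (y : ι → ℝ) j := by
    by_contra! h
    exact hxy (Subtype.ext (funext h))
  -- along `w = t • e_j` with `t (x j - y j) = π`, cosine and sine change sign between `y` and `x`
  set t := Real.pi / ((x : ι → ℝ) j - (y : ι → ℝ) j)
  set θ := t * (y : ι → ℝ) j
  have hx : Pi.single j t ⬝ᵥ (x : ι → ℝ) = θ + Real.pi := by
    rw [single_dotProduct]
    simp only [θ, t]
    field_simp [sub_ne_zero.2 hj]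
    ring
  have hy : Pi.single j t ⬝ᵥ (y : ι → ℝ) = θ := by rw [single_dotProduct]
  by_cases hcos : Real.cos (θ + Real.pi) = Real.cos θ
  · refine ⟨_, ⟨_, cosRidge_mem_cosRidgeSubalgebra K (Pi.single j t) (-(Real.pi / 2)), rfl⟩, ?_⟩
    have hcos0 : Real.cos θ = 0 := by rw [Real.cos_add_pi] at hcos; linarith
    have hsin0 : Real.sin θ ≠ 0 := by
      intro h; simpa [hcos0, h] using Real.sin_sq_add_cos_sq θ
    simp only [cosRidge, ContinuousMap.coe_mk, hx, hy, ← sub_eq_add_neg, Real.cos_sub_pi_div_two,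
      Real.sin_add_pi]
    intro h
    exact hsin0 (by linarith)
  · exact ⟨_, ⟨_, cosRidge_mem_cosRidgeSubalgebra K (Pi.single j t) 0, rfl⟩,
      by simpa only [cosRidge, ContinuousMap.coe_mk, add_zero, hx, hy] using hcos⟩

lemma cosRidge_mem_topologicalClosure_shallowNetSubmodule (hσc : Continuous σ)
    (hσ1 : Tendsto σ atTop (nhds 1)) (hσ0 : Tendsto σ atBot (nhds 0))
    (K : Set (ι → ℝ)) [CompactSpace K] (w : ι → ℝ) (c : ℝ) :
    cosRidge K w c ∈ (shallowNetSubmodule σ K).topologicalClosure := by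
  rw [← SetLike.mem_coe, Submodule.topologicalClosure_coe, Metric.mem_closure_iff]
  intro ε hε
  obtain ⟨C, hC⟩ := isCompact_univ.exists_bound_of_continuousOn
    (f := fun x : K => w ⬝ᵥ (x : ι → ℝ)) (by fun_prop)
  obtain ⟨n, a, b, d, c₀, hnear⟩ := exists_sum_sigmoid_near hσc hσ1 hσ0
    (g := fun t => Real.cos (t + c)) (A := -(|C| + 1)) (B := |C| + 1) (by linarith [abs_nonneg C])
    (by fun_prop) (half_pos hε)
  refine ⟨⟨fun x => ∑ k ∈ Finset.range n, a k * σ (b k * (w ⬝ᵥ (x : ι → ℝ)) + d k) + c₀,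
    by fun_prop⟩, ⟨_, isShallowNet_sum_sigmoid_dotProduct n a b d c₀ w, fun _ => rfl⟩,
    ((ContinuousMap.dist_le (half_pos hε).le).2 fun x => ?_).trans_lt (half_lt_self hε)⟩
  have hx : w ⬝ᵥ (x : ι → ℝ) ∈ Icc (-(|C| + 1)) (|C| + 1) := by
    have := (hC x (mem_univ x)).trans (le_abs_self C)
    rw [Real.norm_eq_abs] at this
    constructor <;> linarith [abs_le.mp this]
  exact (hnear _ hx).le

lemma topologicalClosure_shallowNetSubmodule_eq_top (hσc : Continuous σ)
    (hσ1 : Tendsto σ atTop (nhds 1)) (hσ0 : Tendsto σ atBot (nhds 0))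
    (K : Set (ι → ℝ)) [CompactSpace K] :
    (shallowNetSubmodule σ K).topologicalClosure = ⊤ := by
  classical
  have hspan :
      (cosRidgeSubalgebra K : Set C(K, ℝ)) ⊆ (shallowNetSubmodule σ K).topologicalClosure :=
    Submodule.span_le.mpr (by
      rintro _ ⟨⟨w, c⟩, rfl⟩
      exact cosRidge_mem_topologicalClosure_shallowNetSubmodule hσc hσ1 hσ0 K w c)
  have hdense : closure (cosRidgeSubalgebra K : Set C(K, ℝ)) = univ := by
    rw [← Subalgebra.topologicalClosure_coe,
      ContinuousMap.subalgebra_topologicalClosure_eq_top_of_separatesPoints _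
        (cosRidgeSubalgebra_separatesPoints K)]
    rfl
  rw [eq_top_iff]
  intro f _
  exact closure_minimal hspan (Submodule.isClosed_topologicalClosure _) (hdense ▸ mem_univ f)

theorem exists_isShallowNet_near (hσc : Continuous σ) (hσ1 : Tendsto σ atTop (nhds 1))
    (hσ0 : Tendsto σ atBot (nhds 0)) {K : Set (ι → ℝ)} (hK : IsCompact K)
    {F : (ι → ℝ) → ℝ} (hF : ContinuousOn F K) {ε : ℝ} (hε : 0 < ε) :
    ∃ G, IsShallowNet σ G ∧ ∀ x ∈ K, |F x - G x| < ε := by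
  have := isCompact_iff_compactSpace.mp hK
  have hFK : (⟨fun x : K => F x, hF.domRestrict⟩ : C(K, ℝ)) ∈
      (shallowNetSubmodule σ K).topologicalClosure := by
    rw [topologicalClosure_shallowNetSubmodule_eq_top hσc hσ1 hσ0]
    trivial
  rw [← SetLike.mem_coe, Submodule.topologicalClosure_coe, Metric.mem_closure_iff] at hFK
  obtain ⟨g, ⟨G, hG, hgG⟩, hdist⟩ := hFK ε hε
  refine ⟨G, hG, fun x hx => ?_⟩
  have h := (ContinuousMap.dist_apply_le_dist (⟨x, hx⟩ : K)).trans_lt hdist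
  rwa [hgG, Real.dist_eq] at h

theorem exists_localShallowNet_near (hσc : Continuous σ)
    (hσ1 : Tendsto σ atTop (nhds 1)) (hσ0 : Tendsto σ atBot (nhds 0)) (s : Finset ι)
    {g : (ι → ℝ) → ℝ → ℝ} (hg : Continuous fun p : (ι → ℝ) × ℝ => g p.1 p.2)
    (hloc : ∀ x x' : ι → ℝ, ∀ u, (∀ j ∈ s, x j = x' j) → g x u = g x' u) (r : ℝ) {δ : ℝ}
    (hδ : 0 < δ) :
    ∃ (n : ℕ) (a : Fin n → ℝ) (v : Fin n → ι → ℝ) (w b : Fin n → ℝ) (c : ℝ),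
      (∀ l j, j ∉ s → v l j = 0) ∧
      ∀ x u, (∀ j ∈ s, |x j| ≤ r) → |u| ≤ r →
        |g x u - (∑ l, a l * σ (∑ j, v l j * x j + w l * u + b l) + c)| < δ := by
  classical
  -- coordinate `none` carries the noise, coordinate `some j` the input `j`
  obtain ⟨G, ⟨n, a, W, b, c, hG⟩, hGnear⟩ := exists_isShallowNet_near hσc hσ1 hσ0
    (isCompact_univ_pi fun _ : Option ι => isCompact_Icc (a := -r) (b := r))
    (F := fun y => g (fun j => y (some j)) (y none))
    (hg.comp (f := fun y : Option ι → ℝ => ((fun j => y (some j)), y none))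
      (by fun_prop)).continuousOn hδ
  refine ⟨n, a, fun l j => if j ∈ s then W l (some j) else 0, fun l => W l none, b, c,
    fun l j hj => if_neg hj, fun x u hx hu => ?_⟩
  set y : Option ι → ℝ := fun o => o.elim u fun j => if j ∈ s then x j else 0
  have hy : y ∈ univ.pi fun _ => Icc (-r) r := by
    rintro (_ | j) -
    · exact abs_le.mp hu
    · by_cases hj : j ∈ s
      · simpa [y, hj] using abs_le.mp (hx j hj)
      · simpa [y, hj] using (abs_nonneg u).trans hu
  have hgy : g x u = g (fun j => y (some j)) (y none) :=
    hloc _ _ _ fun j hj => by simp [y, hj]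
  have hGy : G y =
      ∑ l, a l * σ (∑ j, (if j ∈ s then W l (some j) else 0) * x j + W l none * u + b l) + c := by
    rw [hG]
    congr 1
    refine Finset.sum_congr rfl fun l _ => ?_
    simp only [dotProduct, Fintype.sum_option, y, Option.elim_none, Option.elim_some, ite_mul,
      mul_ite, zero_mul, mul_zero]
    rw [add_comm (W l none * u)]
  rw [hgy, ← hGy]
  exact hGnear y hy

end ShallowNet

section RecursiveEvaluation

variable {ι : Type*} {Pa : ι → Finset ι} {ord : ι → ℕ}

/-- The `0` fed for inputs that are not earlier in the order is never read by mechanisms that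
depend only on their parents. -/
noncomputable def evalFCM (ord : ι → ℕ) (F : ι → (ι → ℝ) → ℝ → ℝ) (e : ι → ℝ) (i : ι) : ℝ :=
  F i (fun j => if ord j < ord i then evalFCM ord F e j else 0) (e i)
termination_by ord i

lemma evalFCM_eq (hord : ∀ i, ∀ j ∈ Pa i, ord j < ord i) {F : ι → (ι → ℝ) → ℝ → ℝ}
    (hloc : ∀ i, ∀ x x' : ι → ℝ, ∀ u, (∀ j ∈ Pa i, x j = x' j) → F i x u = F i x' u)
    (e : ι → ℝ) (i : ι) : evalFCM ord F e i = F i (evalFCM ord F e) (e i) := by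
  rw [evalFCM]
  exact hloc i _ _ _ fun j hj => if_pos (hord i j hj)

variable {f : ι → (ι → ℝ) → ℝ → ℝ} {z : (ι → ℝ) → ι → ℝ}

lemma continuous_of_eq_recursion (hord : ∀ i, ∀ j ∈ Pa i, ord j < ord i)
    (hfc : ∀ i, Continuous fun p : (ι → ℝ) × ℝ => f i p.1 p.2)
    (hfloc : ∀ i, ∀ x x' : ι → ℝ, ∀ u, (∀ j ∈ Pa i, x j = x' j) → f i x u = f i x' u)
    (hz : ∀ e i, z e i = f i (z e) (e i)) : Continuous z := by
  classical
  refine continuous_pi fun i => ?_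
  induction i using (measure ord).wf.induction with
  | _ i ih =>
    have hmask : (fun e => z e i) = fun e => f i (fun j => if j ∈ Pa i then z e j else 0) (e i) :=
      funext fun e => (hz e i).trans (hfloc i _ _ _ fun j hj => by simp [hj])
    rw [hmask]
    exact (hfc i).comp ((continuous_pi fun j => continuous_if_const _
      (fun hj => ih j (hord i j hj)) fun _ => continuous_const).prodMk (continuous_apply i))

def IsApproxSolution (Pa : ι → Finset ι) (f : ι → (ι → ℝ) → ℝ → ℝ) (r δ : ℝ) (e y : ι → ℝ) :
    Prop :=
  ∀ i, (∀ j ∈ Pa i, |y j| ≤ r) → |y i - f i y (e i)| < δ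

lemma IsApproxSolution.mono {r δ δ' : ℝ} {e y : ι → ℝ} (hy : IsApproxSolution Pa f r δ e y)
    (hδ : δ ≤ δ') : IsApproxSolution Pa f r δ' e y :=
  fun i hi => (hy i hi).trans_le hδ

end RecursiveEvaluation

section Stability

variable {ι : Type*} [Fintype ι] {Pa : ι → Finset ι} {ord : ι → ℕ}
  {f : ι → (ι → ℝ) → ℝ → ℝ} {z : (ι → ℝ) → ι → ℝ}

lemma exists_pos_abs_sub_lt (hfc : ∀ i, Continuous fun p : (ι → ℝ) × ℝ => f i p.1 p.2)
    (hfloc : ∀ i, ∀ x x' : ι → ℝ, ∀ u, (∀ j ∈ Pa i, x j = x' j) → f i x u = f i x' u)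
    (r : ℝ) {η : ℝ} (hη : 0 < η) :
    ∃ δ > 0, ∀ i, ∀ x x' : ι → ℝ, ∀ u ∈ Icc (0 : ℝ) 1,
      (∀ j ∈ Pa i, |x j| ≤ r ∧ |x' j| ≤ r ∧ |x j - x' j| < δ) → |f i x u - f i x' u| < η := by
  classical
  set K : Set ((ι → ℝ) × ℝ) := (univ.pi fun _ => Icc (-|r|) |r|) ×ˢ Icc 0 1
  have hK : IsCompact K := (isCompact_univ_pi fun _ => isCompact_Icc).prod isCompact_Icc
  obtain ⟨δ, hδ, hunif⟩ := Metric.uniformContinuousOn_iff.mp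
    (hK.uniformContinuousOn_of_continuous (continuous_pi hfc).continuousOn) η hη
  refine ⟨δ, hδ, fun i x x' u hu hxx' => ?_⟩
  -- zeroing the non-parent coordinates moves both points into `K` without changing `f i`
  set m : (ι → ℝ) → ι → ℝ := fun y j => if j ∈ Pa i then y j else 0
  have hm : ∀ y : ι → ℝ, (∀ j ∈ Pa i, |y j| ≤ r) → (m y, u) ∈ K := by
    refine fun y hy => ⟨fun j _ => ?_, hu⟩
    by_cases hj : j ∈ Pa i
    · simpa [m, hj] using abs_le.mp ((hy j hj).trans (le_abs_self r))
    · simp [m, hj]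
  have hdist : dist (m x, u) (m x', u) < δ := by
    rw [Prod.dist_eq, dist_self, max_lt_iff]
    refine ⟨(dist_pi_lt_iff hδ).2 fun j => ?_, hδ⟩
    by_cases hj : j ∈ Pa i
    · simpa [m, hj, Real.dist_eq] using (hxx' j hj).2.2
    · simpa [m, hj] using hδ
  have h := (dist_le_pi_dist _ _ i).trans_lt (hunif _ (hm x fun j hj => (hxx' j hj).1) _
    (hm x' fun j hj => (hxx' j hj).2.1) hdist)
  rwa [Real.dist_eq, ← hfloc i x (m x) u fun j hj => by simp [m, hj],
    ← hfloc i x' (m x') u fun j hj => by simp [m, hj]] at h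

lemma exists_pos_abs_sub_lt_of_isApproxSolution (hord : ∀ i, ∀ j ∈ Pa i, ord j < ord i)
    (hfc : ∀ i, Continuous fun p : (ι → ℝ) × ℝ => f i p.1 p.2)
    (hfloc : ∀ i, ∀ x x' : ι → ℝ, ∀ u, (∀ j ∈ Pa i, x j = x' j) → f i x u = f i x' u)
    (hz : ∀ e i, z e i = f i (z e) (e i)) {r : ℝ}
    (hr : ∀ e, (∀ i, e i ∈ Icc (0 : ℝ) 1) → ∀ j, |z e j| ≤ r) (n : ℕ) {η : ℝ} (hη : 0 < η) :
    ∃ δ > 0, ∀ e, (∀ i, e i ∈ Icc (0 : ℝ) 1) → ∀ y, IsApproxSolution Pa f (r + 1) δ e y →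
      ∀ i, ord i < n → |z e i - y i| < η := by
  induction n generalizing η with
  | zero => exact ⟨1, one_pos, fun _ _ _ _ i hi => absurd hi (Nat.not_lt_zero _)⟩
  | succ n ih =>
    obtain ⟨δ₁, hδ₁, hf⟩ := exists_pos_abs_sub_lt hfc hfloc (r + 1) (half_pos hη)
    obtain ⟨δ₀, hδ₀, hprev⟩ := ih (η := min (min δ₁ 1) (η / 2)) (by positivity)
    refine ⟨min δ₀ (η / 2), by positivity, fun e he y hy i hi => ?_⟩
    have hpar : ∀ j ∈ Pa i, |z e j - y j| < min (min δ₁ 1) (η / 2) := fun j hj =>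
      hprev e he y (hy.mono (min_le_left _ _)) j (by have := hord i j hj; omega)
    have hbox : ∀ j ∈ Pa i, |z e j| ≤ r + 1 ∧ |y j| ≤ r + 1 ∧ |z e j - y j| < δ₁ := by
      intro j hj
      have hzy := hpar j hj
      simp only [lt_min_iff] at hzy
      have hyz := abs_sub_abs_le_abs_sub (y j) (z e j)
      rw [abs_sub_comm (y j)] at hyz
      exact ⟨(hr e he j).trans (by linarith), by linarith [hr e he j], hzy.1.1⟩
    calc |z e i - y i| ≤ |f i (z e) (e i) - f i y (e i)| + |y i - f i y (e i)| := by
          rw [hz e i, abs_sub_comm (y i)]; exact abs_sub_le _ _ _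
      _ < η / 2 + η / 2 := add_lt_add (hf i _ _ (e i) (he i) hbox)
          ((hy i fun j hj => (hbox j hj).2.1).trans_le (min_le_right _ _))
      _ = η := add_halves η

end Stability

/-- Proposition 2 of the paper: for a continuous FCM on a DAG (parents `Pa`, topological
order `ord`, continuous mechanisms `f i` depending only on the parent coordinates and
the noise), and for every `ε > 0`, there exist one-hidden-layer neural network
mechanisms `fhat i` (with continuous sigmoidal activation `σ`, reading only the parent
coordinates) such that the recursive evaluations `z(e)` and `ẑ(e)` in topological order
satisfy `‖z(e) − ẑ(e)‖ < ε` for every noise vector `e ∈ [0,1]^d`. -/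
theorem stmt6 (d : ℕ) (Pa : Fin d → Finset (Fin d)) (ord : Fin d → ℕ)
    (hord : ∀ i, ∀ j ∈ Pa i, ord j < ord i)
    (σ : ℝ → ℝ) (hσc : Continuous σ)
    (hσ1 : Tendsto σ atTop (nhds 1)) (hσ0 : Tendsto σ atBot (nhds 0))
    (f : Fin d → (Fin d → ℝ) → ℝ → ℝ)
    (hfc : ∀ i, Continuous (fun p : (Fin d → ℝ) × ℝ => f i p.1 p.2))
    (hfloc : ∀ i, ∀ z z' : Fin d → ℝ, ∀ u : ℝ,
      (∀ j ∈ Pa i, z j = z' j) → f i z u = f i z' u)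
    (z : (Fin d → ℝ) → Fin d → ℝ)
    (hz : ∀ e i, z e i = f i (z e) (e i))
    (ε : ℝ) (hε : 0 < ε) :
    ∃ (fhat : Fin d → (Fin d → ℝ) → ℝ → ℝ) (zhat : (Fin d → ℝ) → Fin d → ℝ),
      -- each approximate mechanism is a one-hidden-layer neural network reading
      -- only the parent coordinates and the noise
      (∀ i, ∃ (n : ℕ) (wbar : Fin n → ℝ) (what : Fin n → Fin d → ℝ)
          (w b : Fin n → ℝ) (bbar : ℝ),
        (∀ l j, j ∉ Pa i → what l j = 0) ∧
        ∀ (zv : Fin d → ℝ) (u : ℝ),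
          fhat i zv u = (∑ l, wbar l * σ ((∑ j, what l j * zv j) + w l * u + b l)) + bbar) ∧
      -- `zhat` is the recursive evaluation of the approximate FCM
      (∀ e i, zhat e i = fhat i (zhat e) (e i)) ∧
      -- uniform closeness over all noise vectors in `[0,1]^d`
      (∀ e : Fin d → ℝ, (∀ i, e i ∈ Icc (0:ℝ) 1) → dist (z e) (zhat e) < ε) := by
  obtain ⟨r, hr₀, hr⟩ := ((isCompact_univ_pi fun _ => isCompact_Icc).image
    (continuous_of_eq_recursion hord hfc hfloc hz)).isBounded.exists_pos_norm_le
  have hzr : ∀ e, (∀ i, e i ∈ Icc (0 : ℝ) 1) → ∀ j, |z e j| ≤ r := fun e he j =>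
    (norm_le_pi_norm (z e) j).trans (hr _ ⟨e, fun i _ => he i, rfl⟩)
  obtain ⟨δ, hδ, hstable⟩ := exists_pos_abs_sub_lt_of_isApproxSolution hord hfc hfloc hz hzr
    (Finset.univ.sup ord + 1) hε
  choose n a v w b c hv hnear using fun i =>
    exists_localShallowNet_near hσc hσ1 hσ0 (Pa i) (hfc i) (hfloc i) (r + 1) hδ
  set fhat : Fin d → (Fin d → ℝ) → ℝ → ℝ := fun i x u =>
    ∑ l, a i l * σ (∑ j, v i l j * x j + w i l * u + b i l) + c i
  have hfhat : ∀ i, ∀ x x' : Fin d → ℝ, ∀ u,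
      (∀ j ∈ Pa i, x j = x' j) → fhat i x u = fhat i x' u := by
    intro i x x' u hx
    refine congrArg (· + c i) (Finset.sum_congr rfl fun l _ => ?_)
    rw [Finset.sum_congr rfl fun j _ => show v i l j * x j = v i l j * x' j by
      by_cases hj : j ∈ Pa i
      · rw [hx j hj]
      · simp [hv i l j hj]]
  refine ⟨fhat, evalFCM ord fhat, fun i => ⟨n i, a i, v i, w i, b i, c i, hv i, fun _ _ => rfl⟩,
    evalFCM_eq hord hfhat, fun e he => (dist_pi_lt_iff hε).2 fun i => ?_⟩
  refine (Real.dist_eq _ _).trans_lt (hstable e he _ (fun k hk => ?_) i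
    (Nat.lt_succ_of_le (Finset.le_sup (Finset.mem_univ i))))
  rw [evalFCM_eq hord hfhat, abs_sub_comm]
  exact hnear k _ (e k) hk (abs_le.2 ⟨by linarith [(he k).1], by linarith [(he k).2]⟩)
end

section
/- Let k : ℝ^d × ℝ^d → ℝ be a bounded continuous kernel, and let z, ẑ_t : [0,1]^d → ℝ^d be measurable functions with ẑ_t → z uniformly on [0,1]^d as t → ∞. Then MMD_k(t) := E_{e,e'}[k(z(e), z(e')) − 2 k(z(e), ẑ_t(e')) + k(ẑ_t(e), ẑ_t(e'))] tends to 0 as t → ∞, where e, e' are independent uniform random vectors on [0,1]^d. -/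
open MeasureTheory Set Filter

/-- Proposition 3 of the paper: if `ẑ_t → z` uniformly on `[0,1]^d` and the kernel `k`
is bounded and continuous, then the population MMD
`E_{e,e'}[k(z(e),z(e')) − 2k(z(e),ẑ_t(e')) + k(ẑ_t(e),ẑ_t(e'))]`
(with `e, e'` independent uniform on `[0,1]^d`) tends to `0` as `t → ∞`. -/
theorem stmt7 (d : ℕ) (k : (Fin d → ℝ) → (Fin d → ℝ) → ℝ)
    (hkc : Continuous (fun p : (Fin d → ℝ) × (Fin d → ℝ) => k p.1 p.2))
    (C : ℝ) (hkb : ∀ x y, |k x y| ≤ C)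
    (z : (Fin d → ℝ) → Fin d → ℝ) (zhat : ℕ → (Fin d → ℝ) → Fin d → ℝ)
    (hzm : Measurable z) (hzhatm : ∀ t, Measurable (zhat t))
    (hunif : TendstoUniformlyOn zhat z atTop (Set.univ.pi fun _ : Fin d => Icc (0:ℝ) 1)) :
    Tendsto (fun t : ℕ =>
        ∫ e in Set.univ.pi fun _ : Fin d => Icc (0:ℝ) 1,
          ∫ e' in Set.univ.pi fun _ : Fin d => Icc (0:ℝ) 1,
            (k (z e) (z e') - 2 * k (z e) (zhat t e') + k (zhat t e) (zhat t e')))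
      atTop (nhds 0) := by
  set S : Set (Fin d → ℝ) := Set.univ.pi fun _ : Fin d => Icc (0:ℝ) 1 with hS
  have hSm : MeasurableSet S := MeasurableSet.univ_pi fun _ => measurableSet_Icc
  set μ : Measure (Fin d → ℝ) := volume.restrict S with hμ
  have hSc : IsCompact S := isCompact_univ_pi fun _ => isCompact_Icc
  have hμfin : IsFiniteMeasure μ := by
    constructor
    rw [hμ, Measure.restrict_apply_univ]
    exact hSc.measure_lt_top
  set f : ℕ → (Fin d → ℝ) × (Fin d → ℝ) → ℝ := fun t p =>
    k (z p.1) (z p.2) - 2 * k (z p.1) (zhat t p.2) + k (zhat t p.1) (zhat t p.2) with hf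
  have hfm : ∀ t, Measurable (f t) := by
    intro t
    apply Measurable.add
    apply Measurable.sub
    · exact hkc.measurable.comp ((hzm.comp measurable_fst).prodMk (hzm.comp measurable_snd))
    · exact (hkc.measurable.comp ((hzm.comp measurable_fst).prodMk
        ((hzhatm t).comp measurable_snd))).const_mul 2
    · exact hkc.measurable.comp (((hzhatm t).comp measurable_fst).prodMk
        ((hzhatm t).comp measurable_snd))
  have hfb : ∀ t p, |f t p| ≤ 4 * C := by
    intro t p
    have h1 := hkb (z p.1) (z p.2)
    have h2 := hkb (z p.1) (zhat t p.2)
    have h3 := hkb (zhat t p.1) (zhat t p.2)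
    calc |f t p| ≤ |k (z p.1) (z p.2)| + |2 * k (z p.1) (zhat t p.2)| + |k (zhat t p.1) (zhat t p.2)| := by
          apply (abs_add_le _ _).trans
          gcongr
          exact (abs_sub _ _).trans (by simp)
      _ ≤ 4 * C := by rw [abs_mul]; simp only [abs_two]; linarith
  have hfint : ∀ t, Integrable (f t) (μ.prod μ) := by
    intro t
    refine (integrable_const (4 * C)).mono' ((hfm t).aestronglyMeasurable) ?_
    filter_upwards with p using (by simpa using hfb t p)
  have key : Tendsto (fun t => ∫ p, f t p ∂(μ.prod μ)) atTop (nhds 0) := by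
    have h0 : (0 : ℝ) = ∫ _ : (Fin d → ℝ) × (Fin d → ℝ), (0 : ℝ) ∂(μ.prod μ) := by simp
    rw [h0]
    apply tendsto_integral_of_dominated_convergence (fun _ => 4 * C)
      (fun t => (hfm t).aestronglyMeasurable) (integrable_const _)
    · intro t
      filter_upwards with p using (by simpa using hfb t p)
    · have hprod : μ.prod μ = (volume.prod volume).restrict (S ×ˢ S) := by
        rw [hμ, Measure.prod_restrict]
      rw [hprod]
      filter_upwards [ae_restrict_mem (hSm.prod hSm)] with p hp
      obtain ⟨hp1, hp2⟩ := hp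
      have h1 : Tendsto (fun t => zhat t p.1) atTop (nhds (z p.1)) :=
        hunif.tendsto_at hp1
      have h2 : Tendsto (fun t => zhat t p.2) atTop (nhds (z p.2)) :=
        hunif.tendsto_at hp2
      have hk2 : Tendsto (fun t => k (z p.1) (zhat t p.2)) atTop (nhds (k (z p.1) (z p.2))) :=
        (hkc.tendsto _).comp (tendsto_const_nhds.prodMk_nhds h2)
      have hk3 : Tendsto (fun t => k (zhat t p.1) (zhat t p.2)) atTop (nhds (k (z p.1) (z p.2))) :=
        (hkc.tendsto _).comp (h1.prodMk_nhds h2)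
      have := ((tendsto_const_nhds.sub (hk2.const_mul 2)).add hk3 :
        Tendsto (fun t => k (z p.1) (z p.2) - 2 * k (z p.1) (zhat t p.2)
          + k (zhat t p.1) (zhat t p.2)) atTop
          (nhds (k (z p.1) (z p.2) - 2 * k (z p.1) (z p.2) + k (z p.1) (z p.2))))
      have hzero : k (z p.1) (z p.2) - 2 * k (z p.1) (z p.2) + k (z p.1) (z p.2) = 0 := by ring
      rw [hzero] at this
      simpa [f] using this
  convert key using 2 with t
  rw [← MeasureTheory.integral_prod _ (hfint t)]
end

section
/- Let G and Ĝ be two DAGs on the same vertex set with the same adjacencies (same skeleton). If G and Ĝ have the same set of v-structures (unshielded colliders), then they are Markov equivalent, i.e. the d-separation relations of G and Ĝ coincide. -/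
/-!
Call a walk active given `Z` when each inner vertex is an ancestor of `Z` if it is a collider
and lies outside `Z` otherwise. In a DAG, `x` and `y` are d-connected exactly when an active
walk joins them: cutting out a loop keeps a walk active, because a loop starting with an edge
out of `u` must meet a collider before it can return to `u`.

Take an active walk in `G` from `x` to `y` that minimises the weight
`∑ (1 + distance from the vertex to Z in G)`. A collider whose end vertices are adjacent can
be bypassed, so every collider is a v-structure, hence also a collider in `G'`. A collider
of `G'` that is not one of `G` can be bypassed in the same way. A collider that is not an
ancestor of `Z` in `G'` can be moved one step down a shortest `G`-path into `Z`, which lowers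
the weight. Hence the walk is also active in `G'`.
-/

namespace Stmt10

variable {V : Type*}

/-- `x` and `y` are adjacent in the directed graph `G` (edge in either direction):
the skeleton relation. -/
def Adj (G : V → V → Prop) (x y : V) : Prop := G x y ∨ G y x

/-- `G` is a directed acyclic graph: no nontrivial directed cycle. -/
def IsDAG (G : V → V → Prop) : Prop := ∀ x : V, ¬ Relation.TransGen G x x

/-- `l` is an (undirected, self-avoiding) path from `x` to `y` in the skeleton of `G`. -/
def IsPath (G : V → V → Prop) (x y : V) (l : List V) : Prop :=
  l.head? = some x ∧ l.getLast? = some y ∧ l.Chain' (Adj G) ∧ l.Nodup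

/-- `w` is a collider on a path, between its predecessor `a` and successor `b`. -/
def Collider (G : V → V → Prop) (a w b : V) : Prop := G a w ∧ G b w

/-- The path `l` is blocked by the conditioning set `Z`: some interior vertex `w` of
`l` is either a non-collider belonging to `Z`, or a collider none of whose descendants
(including itself) belongs to `Z`. -/
def Blocked (G : V → V → Prop) (Z : Set V) (l : List V) : Prop :=
  ∃ (a w b : V) (l₁ l₂ : List V), l = l₁ ++ [a, w, b] ++ l₂ ∧
    ((¬ Collider G a w b ∧ w ∈ Z) ∨
     (Collider G a w b ∧ ∀ v : V, Relation.ReflTransGen G w v → v ∉ Z))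

/-- `x` and `y` are d-separated by `Z` in `G`: every path between them is blocked. -/
def DSep (G : V → V → Prop) (Z : Set V) (x y : V) : Prop :=
  ∀ l : List V, IsPath G x y l → Blocked G Z l

/-- `(a, b, c)` is a v-structure (unshielded collider) in `G`. -/
def VStruct (G : V → V → Prop) (a b c : V) : Prop :=
  G a b ∧ G c b ∧ a ≠ c ∧ ¬ Adj G a c

variable {G G' : V → V → Prop} {Z : Set V} {x y : V}

theorem Adj.symm {a b : V} (h : Adj G a b) : Adj G b a := Or.symm h

theorem collider_comm {a w b : V} : Collider G a w b ↔ Collider G b w a := and_comm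

namespace IsDAG

theorem asymm (hG : IsDAG G) {a b : V} (h : G a b) : ¬ G b a :=
  fun h' => hG a (.tail (.single h) h')

theorem not_rel_of_rel_of_rel (hG : IsDAG G) {a b c : V} (h₁ : G a b) (h₂ : G b c) : ¬ G c a :=
  fun h₃ => hG a (.tail (.tail (.single h₁) h₂) h₃)

end IsDAG

def ancestors (G : V → V → Prop) (Z : Set V) : Set V :=
  {w | ∃ v ∈ Z, Relation.ReflTransGen G w v}

theorem mem_ancestors_of_mem {v : V} (hv : v ∈ Z) : v ∈ ancestors G Z := ⟨v, hv, .refl⟩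

theorem mem_ancestors_of_rel {u v : V} (huv : G u v) (hv : v ∈ ancestors G Z) :
    u ∈ ancestors G Z :=
  let ⟨z, hz, hvz⟩ := hv
  ⟨z, hz, .head huv hvz⟩

def IsOpenTriple (G : V → V → Prop) (Z : Set V) (a w b : V) : Prop :=
  (Collider G a w b → w ∈ ancestors G Z) ∧ (¬ Collider G a w b → w ∉ Z)

namespace IsOpenTriple

variable {p a w b : V}

theorem symm (h : IsOpenTriple G Z p a b) : IsOpenTriple G Z b a p :=
  ⟨fun hc => h.1 (collider_comm.mp hc), fun hc => h.2 (mt collider_comm.mp hc)⟩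

theorem not_mem (hG : IsDAG G) (h : IsOpenTriple G Z p a w) (haw : G a w) : a ∉ Z :=
  h.2 fun hc => hG.asymm haw hc.2

theorem of_not_collider (hc : ¬ Collider G p a b) (ha : a ∉ Z) : IsOpenTriple G Z p a b :=
  ⟨fun h => absurd h hc, fun _ => ha⟩

theorem of_mem_ancestors (ha : a ∈ ancestors G Z) (ha' : a ∉ Z) : IsOpenTriple G Z p a b :=
  ⟨fun _ => ha, fun _ => ha'⟩

/-- A collider at `a` would close the directed cycle `b → a → w → b`. -/
theorem bypass (hG : IsDAG G) (h : IsOpenTriple G Z p a w) (haw : Adj G a w) (hwb : Adj G w b)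
    (hpaw : ¬ Collider G p a w) (hawb : ¬ Collider G a w b) : IsOpenTriple G Z p a b := by
  refine of_not_collider ?_ (h.2 hpaw)
  rintro ⟨hpa, hba⟩
  have haw' : G a w := haw.resolve_right fun hwa => hpaw ⟨hpa, hwa⟩
  have hwb' : G w b := hwb.resolve_right fun hbw => hawb ⟨haw', hbw⟩
  exact hG.not_rel_of_rel_of_rel haw' hwb' hba

end IsOpenTriple

def IsActive (G : V → V → Prop) (Z : Set V) (l : List V) : Prop :=
  ∀ a w b, [a, w, b] <:+: l → IsOpenTriple G Z a w b

theorem IsActive.infix {l l' : List V} (h : IsActive G Z l) (hl : l' <:+: l) :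
    IsActive G Z l' :=
  fun a w b ht => h a w b (ht.trans hl)

theorem isActive_of_length_le {l : List V} (hl : l.length ≤ 2) : IsActive G Z l :=
  fun a w b ht => absurd ht.length_le (by simp; omega)

theorem isActive_cons_cons_cons {a w b : V} {l : List V} :
    IsActive G Z (a :: w :: b :: l) ↔ IsOpenTriple G Z a w b ∧ IsActive G Z (w :: b :: l) := by
  refine ⟨fun h => ⟨h a w b ⟨[], l, rfl⟩, h.infix (List.suffix_cons _ _).isInfix⟩, ?_⟩
  rintro ⟨hopen, h⟩ p q r ht
  rcases List.infix_cons_iff.mp ht with ht | ht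
  · simp only [List.cons_prefix_cons] at ht
    obtain ⟨rfl, rfl, rfl, -⟩ := ht
    exact hopen
  · exact h p q r ht

theorem isActive_append_cons {X Y : List V} {u : V} :
    IsActive G Z (X ++ u :: Y) ↔ IsActive G Z (X ++ [u]) ∧ IsActive G Z (u :: Y) ∧
      ∀ p ∈ X.getLast?, ∀ r ∈ Y.head?, IsOpenTriple G Z p u r := by
  induction X using List.twoStepInduction with
  | nil => simp [isActive_of_length_le]
  | singleton x =>
    cases Y with
    | nil => simp [isActive_of_length_le]
    | cons r Y => simp [isActive_cons_cons_cons, isActive_of_length_le, and_comm]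
  | cons_cons x x' X _ ih =>
    specialize ih x'
    cases X <;> simp_all [isActive_cons_cons_cons, and_assoc]

theorem isActive_iff_not_blocked {l : List V} : IsActive G Z l ↔ ¬ Blocked G Z l := by
  constructor
  · rintro h ⟨a, w, b, l₁, l₂, rfl, hbad⟩
    have hopen := h a w b ⟨l₁, l₂, rfl⟩
    rcases hbad with ⟨hnc, hw⟩ | ⟨hc, hno⟩
    · exact hopen.2 hnc hw
    · obtain ⟨v, hv, hwv⟩ := hopen.1 hc
      exact hno v hwv hv
  · rintro h a w b ⟨l₁, l₂, rfl⟩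
    refine ⟨fun hc => ?_, fun hnc hw => h ⟨a, w, b, l₁, l₂, rfl, .inl ⟨hnc, hw⟩⟩⟩
    by_contra hno
    exact h ⟨a, w, b, l₁, l₂, rfl, .inr ⟨hc, fun v hwv hv => hno ⟨v, hv, hwv⟩⟩⟩

theorem IsActive.mem_ancestors_or_transGen {u v : V} {L : List V}
    (hact : IsActive G Z (u :: v :: L)) (hchain : (u :: v :: L).IsChain (Adj G)) (huv : G u v) :
    u ∈ ancestors G Z ∨ ∀ z ∈ v :: L, Relation.TransGen G u z := by
  induction L generalizing u v with
  | nil => exact .inr fun z hz => by rw [List.mem_singleton.mp hz]; exact .single huv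
  | cons w L ih =>
    obtain ⟨hopen, hact⟩ := isActive_cons_cons_cons.mp hact
    have hchain := hchain.tail
    by_cases hwv : G w v
    · exact .inl (mem_ancestors_of_rel huv (hopen.1 ⟨huv, hwv⟩))
    rcases ih hact hchain ((List.isChain_cons_cons.mp hchain).1.resolve_right hwv) with h | h
    · exact .inl (mem_ancestors_of_rel huv h)
    · refine .inr fun z hz => ?_
      rcases List.mem_cons.mp hz with rfl | hz
      · exact .single huv
      · exact .head huv (h z hz)

structure IsActiveWalk (G : V → V → Prop) (Z : Set V) (x y : V) (l : List V) : Prop where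
  head_eq : l.head? = some x
  getLast_eq : l.getLast? = some y
  chain : l.IsChain (Adj G)
  active : IsActive G Z l

variable {A M B : List V} {a w b : V}

namespace IsActiveWalk

theorem shortcut (hG : IsDAG G) {u : V}
    (hW : IsActiveWalk G Z x y (A ++ u :: (M ++ u :: B))) : IsActiveWalk G Z x y (A ++ u :: B) := by
  have hc₁ := List.isChain_split.mp hW.chain
  have hc₂ := (List.isChain_split (l₁ := u :: M)).mp hc₁.2
  have ha₁ := isActive_append_cons.mp hW.active
  have ha₂ := (isActive_append_cons (X := u :: M)).mp ha₁.2.1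
  refine ⟨by cases A <;> exact hW.head_eq, ?_, List.isChain_split.mpr ⟨hc₁.1, hc₂.2⟩,
    isActive_append_cons.mpr ⟨ha₁.1, ha₂.2.1, fun p hp r hr => ?_⟩⟩
  · have h := hW.getLast_eq
    rw [← List.cons_append, ← List.append_assoc, List.getLast?_append_cons] at h
    rwa [List.getLast?_append_cons]
  obtain ⟨m₁, rest, hrest⟩ : ∃ m₁ rest, M ++ u :: B = m₁ :: rest := by
    cases M <;> exact ⟨_, _, rfl⟩
  have hopen₁ : IsOpenTriple G Z p u m₁ := ha₁.2.2 p hp m₁ (by simp [hrest])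
  have hopen₂ : IsOpenTriple G Z ((A ++ u :: M).getLast (by simp)) u r :=
    (isActive_append_cons.mp (by simpa using hW.active)).2.2 _
      (List.getLast?_eq_some_getLast _) r hr
  refine ⟨fun hc => ?_, fun hnc => ?_⟩
  · by_cases hm₁ : G m₁ u
    · exact hopen₁.1 ⟨hc.1, hm₁⟩
    rw [hrest] at hc₁ ha₁
    have hum₁ : G u m₁ := (List.isChain_cons_cons.mp hc₁.2).1.resolve_right hm₁
    refine (ha₁.2.1.mem_ancestors_or_transGen hc₁.2 hum₁).resolve_right fun h => ?_
    exact hG u (h u (hrest ▸ by simp))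
  · by_cases hpu : G p u
    · exact hopen₂.2 fun hc => hnc ⟨hpu, hc.2⟩
    · exact hopen₁.2 fun hc => hpu hc.1

theorem splice {M' : List V}
    (hW : IsActiveWalk G Z x y (A ++ a :: (M ++ b :: B)))
    (hchain : (a :: (M' ++ [b])).IsChain (Adj G)) (hact : IsActive G Z (a :: (M' ++ [b])))
    (hleft : ∀ p ∈ A.getLast?, ∀ m ∈ (M' ++ [b]).head?, IsOpenTriple G Z p a m)
    (hright : ∀ m ∈ (a :: M').getLast?, ∀ r ∈ B.head?, IsOpenTriple G Z m b r) :
    IsActiveWalk G Z x y (A ++ a :: (M' ++ b :: B)) := by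
  have hc₁ := List.isChain_split.mp hW.chain
  have hc₂ := (List.isChain_split (l₁ := a :: M)).mp hc₁.2
  have ha₁ := isActive_append_cons.mp hW.active
  have ha₂ := (isActive_append_cons (X := a :: M)).mp ha₁.2.1
  have hchain' := (List.isChain_split (l₁ := a :: M')).mpr ⟨hchain, hc₂.2⟩
  have hact' := (isActive_append_cons (X := a :: M')).mpr ⟨hact, ha₂.2.1, hright⟩
  refine ⟨by cases A <;> exact hW.head_eq, ?_, List.isChain_split.mpr ⟨hc₁.1, hchain'⟩,
    isActive_append_cons.mpr ⟨ha₁.1, hact', fun p hp m hm =>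
      hleft p hp m (by cases M' <;> simpa using hm)⟩⟩
  have h := hW.getLast_eq
  rw [← List.cons_append, ← List.append_assoc, List.getLast?_append_cons] at h ⊢
  exact h

theorem bypass (hW : IsActiveWalk G Z x y (A ++ [a, w, b] ++ B)) (hab : Adj G a b)
    (hleft : ∀ p ∈ A.getLast?, IsOpenTriple G Z p a b)
    (hright : ∀ r ∈ B.head?, IsOpenTriple G Z a b r) :
    IsActiveWalk G Z x y (A ++ [a, b] ++ B) := by
  simpa using (show IsActiveWalk G Z x y (A ++ a :: ([] ++ b :: B)) from
    splice (M := [w]) (by simpa using hW) (by simpa using hab) (isActive_of_length_le (by simp))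
      (by simpa using hleft) (by simpa using hright))

theorem replace {v : V} (hW : IsActiveWalk G Z x y (A ++ [a, w, b] ++ B))
    (hav : Adj G a v) (hvb : Adj G v b) (hopen : IsOpenTriple G Z a v b)
    (hleft : ∀ p ∈ A.getLast?, IsOpenTriple G Z p a v)
    (hright : ∀ r ∈ B.head?, IsOpenTriple G Z v b r) :
    IsActiveWalk G Z x y (A ++ [a, v, b] ++ B) := by
  simpa using (show IsActiveWalk G Z x y (A ++ a :: ([v] ++ b :: B)) from
    splice (M := [w]) (by simpa using hW) (by simp [hav, hvb])
      (isActive_cons_cons_cons.mpr ⟨hopen, isActive_of_length_le (by simp)⟩)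
      (by simpa using hleft) (by simpa using hright))

end IsActiveWalk

theorem infix_left_of_mem_getLast? {p : V} (hp : p ∈ A.getLast?) :
    [p, a, w] <:+: A ++ [a, w, b] ++ B := by
  obtain ⟨A', rfl⟩ := List.getLast?_eq_some_iff.mp hp
  exact ⟨A', b :: B, by simp⟩

theorem infix_right_of_mem_head? {r : V} (hr : r ∈ B.head?) :
    [w, b, r] <:+: A ++ [a, w, b] ++ B := by
  obtain ⟨B', rfl⟩ := List.head?_eq_some_iff.mp hr
  exact ⟨A ++ [a], B', by simp⟩

def stepsTo (G : V → V → Prop) (Z : Set V) : ℕ → Set V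
  | 0 => Z
  | n + 1 => {u | ∃ v, G u v ∧ v ∈ stepsTo G Z n}

theorem mem_ancestors_iff {w : V} : w ∈ ancestors G Z ↔ ∃ n, w ∈ stepsTo G Z n := by
  constructor
  · rintro ⟨v, hv, hwv⟩
    induction hwv using Relation.ReflTransGen.head_induction_on with
    | refl => exact ⟨0, hv⟩
    | head huv _ ih =>
      obtain ⟨n, hn⟩ := ih
      exact ⟨n + 1, _, huv, hn⟩
  · rintro ⟨n, hn⟩
    induction n generalizing w with
    | zero => exact mem_ancestors_of_mem hn
    | succ n ih =>
      obtain ⟨v, hwv, hv⟩ := hn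
      exact mem_ancestors_of_rel hwv (ih hv)

/-- The length of a shortest directed path from `w` into `Z`; junk value `0` outside
`ancestors G Z`. -/
noncomputable def distTo (G : V → V → Prop) (Z : Set V) (w : V) : ℕ :=
  sInf {n | w ∈ stepsTo G Z n}

theorem mem_stepsTo_distTo {w : V} (hw : w ∈ ancestors G Z) : w ∈ stepsTo G Z (distTo G Z w) :=
  Nat.sInf_mem (mem_ancestors_iff.mp hw)

theorem distTo_le_succ {u v : V} (huv : G u v) (hv : v ∈ ancestors G Z) :
    distTo G Z u ≤ distTo G Z v + 1 :=
  Nat.sInf_le ⟨v, huv, mem_stepsTo_distTo hv⟩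

theorem exists_rel_distTo_lt {w : V} (hw : w ∈ ancestors G Z) (hwZ : w ∉ Z) :
    ∃ v, G w v ∧ v ∈ ancestors G Z ∧ distTo G Z v < distTo G Z w := by
  have h := mem_stepsTo_distTo hw
  cases hd : distTo G Z w with
  | zero => rw [hd] at h; exact absurd h hwZ
  | succ n =>
    rw [hd] at h
    obtain ⟨v, hwv, hv⟩ := h
    exact ⟨v, hwv, mem_ancestors_iff.mpr ⟨n, hv⟩, (Nat.sInf_le hv).trans_lt n.lt_succ_self⟩

noncomputable def weight (G : V → V → Prop) (Z : Set V) (l : List V) : ℕ :=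
  (l.map fun v => distTo G Z v + 1).sum

structure IsMinimalActiveWalk (G : V → V → Prop) (Z : Set V) (x y : V) (l : List V) : Prop
    extends IsActiveWalk G Z x y l where
  minimal : ∀ l', IsActiveWalk G Z x y l' → weight G Z l ≤ weight G Z l'

theorem exists_isMinimalActiveWalk (h : ∃ l, IsActiveWalk G Z x y l) :
    ∃ l, IsMinimalActiveWalk G Z x y l := by
  obtain ⟨l, hl, hmin⟩ := (measure (weight G Z)).wf.has_min {l | IsActiveWalk G Z x y l} h
  exact ⟨l, hl, fun l' hl' => not_lt.mp (hmin l' hl')⟩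

theorem IsMinimalActiveWalk.nodup (hG : IsDAG G) {l : List V}
    (hl : IsMinimalActiveWalk G Z x y l) : l.Nodup := by
  refine List.nodup_iff_sublist.mpr fun u hu => ?_
  obtain ⟨r₁, r₂, rfl, hu₁, hu₂⟩ := List.cons_sublist_iff.mp hu
  obtain ⟨A, M₁, rfl⟩ := List.append_of_mem hu₁
  obtain ⟨M₂, B, rfl⟩ := List.append_of_mem (List.singleton_sublist.mp hu₂)
  have hW : IsActiveWalk G Z x y (A ++ u :: (M₁ ++ M₂ ++ u :: B)) := by
    simpa using hl.toIsActiveWalk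
  have := hl.minimal _ (hW.shortcut hG)
  simp [weight] at this
  omega

theorem not_dSep_iff (hG : IsDAG G) : ¬ DSep G Z x y ↔ ∃ l, IsActiveWalk G Z x y l := by
  simp only [DSep, not_forall, exists_prop]
  constructor
  · rintro ⟨l, ⟨hx, hy, hc, -⟩, hl⟩
    exact ⟨l, hx, hy, hc, isActive_iff_not_blocked.mpr hl⟩
  · intro h
    obtain ⟨l, hl⟩ := exists_isMinimalActiveWalk h
    exact ⟨l, ⟨hl.head_eq, hl.getLast_eq, hl.chain, hl.nodup hG⟩,
      isActive_iff_not_blocked.mp hl.active⟩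

/-- Otherwise `a → w ← v` would be a v-structure of `G'` but not of `G`. -/
theorem rel_of_reversed_edge (hG : IsDAG G) (hskel : ∀ x y, Adj G x y ↔ Adj G' x y)
    (hv : ∀ a b c, VStruct G a b c ↔ VStruct G' a b c) {v : V}
    (haw : G a w) (haw' : G' a w) (hwv : G w v) (hvw' : G' v w) : G a v := by
  have hav : a ≠ v := by rintro rfl; exact hG.asymm haw hwv
  have hadj : Adj G a v := by
    by_contra hna
    exact hG.asymm hwv ((hv a w v).mpr ⟨haw', hvw', hav, fun h => hna ((hskel a v).mpr h)⟩).2.1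
  exact hadj.resolve_right (hG.not_rel_of_rel_of_rel haw hwv)

/-- Descend along a shortest `G`-path into `Z`: two consecutive reversed edges on it would
give a shortcut. -/
theorem exists_reversed_edge (hG : IsDAG G) (hskel : ∀ x y, Adj G x y ↔ Adj G' x y)
    (hv : ∀ a b c, VStruct G a b c ↔ VStruct G' a b c)
    (hw : w ∈ ancestors G Z) (hw' : w ∉ ancestors G' Z) :
    ∃ v, G w v ∧ G' v w ∧ v ∈ ancestors G Z ∧ distTo G Z v < distTo G Z w := by
  induction hd : distTo G Z w using Nat.strong_induction_on generalizing w with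
  | _ n ih =>
    obtain ⟨v, hwv, hvZ, hlt⟩ := exists_rel_distTo_lt hw fun h => hw' (mem_ancestors_of_mem h)
    rw [hd] at hlt
    refine ⟨v, hwv, ((hskel w v).mp (.inl hwv)).resolve_left fun hwv' => ?_, hvZ, hlt⟩
    obtain ⟨u, hvu, huv', huZ, hlt'⟩ :=
      ih _ hlt hvZ (fun h => hw' (mem_ancestors_of_rel hwv' h)) rfl
    have := distTo_le_succ (rel_of_reversed_edge hG hskel hv hwv hwv' hvu huv') huZ
    omega

namespace IsMinimalActiveWalk

variable {l : List V}

theorem ne (hG : IsDAG G) (hl : IsMinimalActiveWalk G Z x y l) (ht : [a, w, b] <:+: l) :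
    a ≠ b := by
  have := (hl.nodup hG).sublist ht.sublist
  simp only [List.nodup_cons, List.mem_cons] at this
  tauto

/-- A shielded collider could be bypassed, lowering the weight. -/
theorem vStruct (hG : IsDAG G) (hl : IsMinimalActiveWalk G Z x y l) (ht : [a, w, b] <:+: l)
    (hc : Collider G a w b) : VStruct G a w b := by
  refine ⟨hc.1, hc.2, hl.ne hG ht, fun hab => ?_⟩
  have hw := (hl.active a w b ht).1 hc
  obtain ⟨A, B, rfl⟩ := ht
  have hW := hl.bypass hab
    (fun p hp => .of_mem_ancestors (mem_ancestors_of_rel hc.1 hw)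
      ((hl.active _ _ _ (infix_left_of_mem_getLast? hp)).not_mem hG hc.1))
    (fun r hr => .of_mem_ancestors (mem_ancestors_of_rel hc.2 hw)
      ((hl.active _ _ _ (infix_right_of_mem_head? hr)).symm.not_mem hG hc.2))
  have := hl.minimal _ hW
  simp [weight] at this

theorem collider_of_collider (hG : IsDAG G) (hv : ∀ a b c, VStruct G a b c ↔ VStruct G' a b c)
    (hl : IsMinimalActiveWalk G Z x y l) (ht : [a, w, b] <:+: l) (hc : Collider G a w b) :
    Collider G' a w b :=
  let h := (hv a w b).mp (hl.vStruct hG ht hc)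
  ⟨h.1, h.2.1⟩

theorem collider_of_collider' (hG : IsDAG G) (hG' : IsDAG G')
    (hskel : ∀ x y, Adj G x y ↔ Adj G' x y)
    (hv : ∀ a b c, VStruct G a b c ↔ VStruct G' a b c)
    (hl : IsMinimalActiveWalk G Z x y l) (ht : [a, w, b] <:+: l) (hc' : Collider G' a w b) :
    Collider G a w b := by
  by_contra hnc
  have hab : Adj G a b := by
    by_contra hna
    have h := (hv a w b).mpr ⟨hc'.1, hc'.2, hl.ne hG ht, fun h => hna ((hskel a b).mpr h)⟩
    exact hnc ⟨h.1, h.2.1⟩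
  have ⟨haw, hwb⟩ : Adj G a w ∧ Adj G w b := by simpa using hl.chain.infix ht
  obtain ⟨A, B, rfl⟩ := ht
  have hW := hl.bypass hab
    (fun p hp => by
      have ht' : [p, a, w] <:+: A ++ [a, w, b] ++ B := infix_left_of_mem_getLast? hp
      exact (hl.active _ _ _ ht').bypass hG haw hwb
        (fun hc => hG'.asymm hc'.1 (hl.collider_of_collider hG hv ht' hc).2) hnc)
    (fun r hr => by
      have ht' : [w, b, r] <:+: A ++ [a, w, b] ++ B := infix_right_of_mem_head? hr
      exact ((hl.active _ _ _ ht').symm.bypass hG hwb.symm haw.symm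
        (fun hc => hG'.asymm hc'.2 (hl.collider_of_collider hG hv ht' (collider_comm.mp hc)).1)
        (mt collider_comm.mpr hnc)).symm)
  have := hl.minimal _ hW
  simp [weight] at this

theorem mem_ancestors (hG : IsDAG G) (hskel : ∀ x y, Adj G x y ↔ Adj G' x y)
    (hv : ∀ a b c, VStruct G a b c ↔ VStruct G' a b c)
    (hl : IsMinimalActiveWalk G Z x y l) (ht : [a, w, b] <:+: l) (hc : Collider G a w b) :
    w ∈ ancestors G' Z := by
  by_contra hw'
  obtain ⟨v, hwv, hvw', hvZ, hlt⟩ :=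
    exists_reversed_edge hG hskel hv ((hl.active a w b ht).1 hc) hw'
  have hc' := hl.collider_of_collider hG hv ht hc
  have hav := rel_of_reversed_edge hG hskel hv hc.1 hc'.1 hwv hvw'
  have hbv := rel_of_reversed_edge hG hskel hv hc.2 hc'.2 hwv hvw'
  obtain ⟨A, B, rfl⟩ := ht
  have hW := hl.replace (.inl hav) (.inr hbv) ⟨fun _ => hvZ, fun h => absurd ⟨hav, hbv⟩ h⟩
    (fun p hp => .of_not_collider (fun h => hG.asymm hav h.2)
      ((hl.active _ _ _ (infix_left_of_mem_getLast? hp)).not_mem hG hc.1))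
    (fun r hr => (IsOpenTriple.of_not_collider (fun h => hG.asymm hbv h.2)
      ((hl.active _ _ _ (infix_right_of_mem_head? hr)).symm.not_mem hG hc.2)).symm)
  have := hl.minimal _ hW
  simp [weight] at this
  omega

theorem isActiveWalk (hG : IsDAG G) (hG' : IsDAG G')
    (hskel : ∀ x y, Adj G x y ↔ Adj G' x y)
    (hv : ∀ a b c, VStruct G a b c ↔ VStruct G' a b c)
    (hl : IsMinimalActiveWalk G Z x y l) : IsActiveWalk G' Z x y l where
  head_eq := hl.head_eq
  getLast_eq := hl.getLast_eq
  chain := hl.chain.imp fun a b => (hskel a b).mp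
  active a w b ht :=
    have hiff : Collider G a w b ↔ Collider G' a w b :=
      ⟨hl.collider_of_collider hG hv ht, hl.collider_of_collider' hG hG' hskel hv ht⟩
    ⟨fun hc' => hl.mem_ancestors hG hskel hv ht (hiff.mpr hc'),
      fun hnc' => (hl.active a w b ht).2 (mt hiff.mp hnc')⟩

end IsMinimalActiveWalk

theorem dSep_of_dSep (hG : IsDAG G) (hG' : IsDAG G')
    (hskel : ∀ x y, Adj G x y ↔ Adj G' x y)
    (hv : ∀ a b c, VStruct G a b c ↔ VStruct G' a b c)
    (h : DSep G' Z x y) : DSep G Z x y := by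
  by_contra hd
  obtain ⟨l, hl⟩ := exists_isMinimalActiveWalk ((not_dSep_iff hG).mp hd)
  exact (not_dSep_iff hG').mpr ⟨l, hl.isActiveWalk hG hG' hskel hv⟩ h

/-- The Verma–Pearl theorem: two DAGs with the same skeleton and the same
v-structures are Markov equivalent, i.e. their d-separation relations coincide. -/
theorem stmt10 (G G' : V → V → Prop) (hG : IsDAG G) (hG' : IsDAG G')
    (hskel : ∀ x y, Adj G x y ↔ Adj G' x y)
    (hv : ∀ a b c, VStruct G a b c ↔ VStruct G' a b c) :
    ∀ (Z : Set V) (x y : V), DSep G Z x y ↔ DSep G' Z x y := by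
  intro Z x y
  exact ⟨dSep_of_dSep hG' hG (fun x y => (hskel x y).symm) (fun a b c => (hv a b c).symm),
    dSep_of_dSep hG hG' hskel hv⟩

end Stmt10
end
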